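/- Consider the two-layer drive-response networked sampled-data system under the Multi-scale sampling pattern with integer l ≥ 1 (the drive layer sampled with period l·h, the response layer with period h): define Φ̃^{1,1} = I_N ⊗ e^{A^1 l h} + W^1 ⊗ 𝓗^1(lh), Ψ̃^{1,1} = Δ^1 ⊗ 𝓑^1(lh), Φ̃^{2,2} = (Φ^{2,2})^l, Φ̃^{2,1} = (Σ_{r=0}^{l−1} (Φ^{2,2})^r)·Φ^{2,1}, Ψ̃^{2,2} = [(Φ^{2,2})^{l−1} Ψ^{2,2}, …, Φ^{2,2} Ψ^{2,2}, Ψ^{2,2}], Φ̃_s = [[Φ̃^{1,1}, 0], [Φ̃^{2,1}, Φ̃^{2,2}]], Ψ̃_s = diag(Ψ̃^{1,1}, Ψ̃^{2,2}). Suppose: (1) for every μ ∈ ℂ and every nonzero row vector η ∈ ℂ^{1×Nn} with η Φ̃^{1,1} = μ η, one has η(Δ^1 ⊗ 𝓑^1(lh)) ≠ 0; and (2) for every μ ∈ ℂ, every nonzero η ∈ ℂ^{1×Nn} with η (Φ^{2,2})^l = μ η, and every ξ ∈ ℂ^{1×Nn} with ξ(μ I_{Nn} − Φ̃^{1,1})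 = η Φ̃^{2,1}, the concatenated row vector [ξ(Δ^1 ⊗ 𝓑^1(lh)), η(Δ^2 ⊗ 𝓑^2(h))] is nonzero. Then the discrete-time system x(k+1) = Φ̃_s x(k) + Ψ̃_s u(k) is controllable. -/

import Mathlib

open Matrix
open scoped Kronecker

/-- Matrix exponential of a real square matrix. -/
noncomputable def matExp {k : Type*} [Fintype k] [DecidableEq k]
    (A : Matrix k k ℝ) : Matrix k k ℝ := NormedSpace.exp A

/-- Entrywise integral `∫₀ʰ e^{Aτ} dτ`. -/
noncomputable def intExp {k : Type*} [Fintype k] [DecidableEq k]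
    (A : Matrix k k ℝ) (h : ℝ) : Matrix k k ℝ :=
  Matrix.of fun i j => ∫ τ in (0:ℝ)..h, matExp (τ • A) i j

/-- A real matrix regarded as a complex matrix entrywise. -/
def cmap {a b : Type*} (M : Matrix a b ℝ) : Matrix a b ℂ := M.map Complex.ofReal

/-- `θ` is a (complex) eigenvalue of the complex matrix `M`. -/
def IsEig {k : Type*} [Fintype k] (M : Matrix k k ℂ) (θ : ℂ) : Prop :=
  ∃ v : k → ℂ, v ≠ 0 ∧ M.mulVec v = θ • v

/-- Controllability of the discrete-time linear system `x(k+1) = F x(k) + G u(k)`: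
every target state can be reached from every initial state in finite time. -/
def Controllable {q r : Type*} [Fintype q] [Fintype r]
    (F : Matrix q q ℝ) (G : Matrix q r ℝ) : Prop :=
  ∀ x₀ xf : q → ℝ, ∃ (T : ℕ) (u : ℕ → r → ℝ) (x : ℕ → q → ℝ),
    x 0 = x₀ ∧ (∀ k, x (k + 1) = F.mulVec (x k) + G.mulVec (u k)) ∧ x T = xf


/-!
By the Popov–Belevitch–Hautus test it suffices that no complex left eigenvector of `Φ̃_s`
annihilates `Ψ̃_s`. If the column spaces of the `F ^ k * G` did not span, some nonzero real row
vector would annihilate all of them; the complex row vectors with this property form an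
`F`-invariant subspace, which then contains a left eigenvector `η` of `F` with `η G = 0`.

For the block lower-triangular `Φ̃_s`, a left eigenvector `[ξ, η]` either has `η = 0`, so that `ξ`
is a left eigenvector of `Φ̃^{1,1}` and condition (1) applies, or `η` is a left eigenvector of
`(Φ^{2,2})^l` and `ξ (μ I - Φ̃^{1,1}) = η Φ̃^{2,1}`, so condition (2) applies. As `Ψ^{2,2}` is a
column block of `Ψ̃^{2,2}`, both rule out `[ξ, η] Ψ̃_s = 0`.
-/

section Complexification

variable {a b c d : Type*}

theorem cmap_mul [Fintype b] (M : Matrix a b ℝ) (N : Matrix b c ℝ) :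
    cmap (M * N) = cmap M * cmap N :=
  Matrix.map_mul (f := Complex.ofRealHom)

theorem cmap_pow [Fintype a] [DecidableEq a] (M : Matrix a a ℝ) (k : ℕ) :
    cmap (M ^ k) = cmap M ^ k :=
  map_pow Complex.ofRealHom.mapMatrix M k

theorem cmap_fromBlocks (A : Matrix a c ℝ) (B : Matrix a d ℝ) (C : Matrix b c ℝ)
    (D : Matrix b d ℝ) :
    cmap (fromBlocks A B C D) = fromBlocks (cmap A) (cmap B) (cmap C) (cmap D) :=
  fromBlocks_map A B C D _

@[simp]
theorem cmap_zero : cmap (0 : Matrix a b ℝ) = 0 :=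
  Matrix.map_zero _ Complex.ofReal_zero

theorem ofReal_comp_vecMul [Fintype a] (w : a → ℝ) (M : Matrix a b ℝ) :
    (Complex.ofReal ∘ w) ᵥ* cmap M = Complex.ofReal ∘ (w ᵥ* M) :=
  funext fun j => (RingHom.map_vecMul Complex.ofRealHom M w j).symm

end Complexification

def HautusCondition {q r : Type*} [Fintype q] (F : Matrix q q ℝ) (G : Matrix q r ℝ) : Prop :=
  ∀ (μ : ℂ) (η : q → ℂ), η ≠ 0 → η ᵥ* cmap F = μ • η → η ᵥ* cmap G ≠ 0

section Hautus

variable {q r : Type*} [Fintype q] [DecidableEq q]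

theorem exists_left_eigenvector_vecMul_eq_zero {K : Type*} [Field K] [IsAlgClosed K]
    (F : Matrix q q K) (G : Matrix q r K) {w : q → K} (hw : w ≠ 0)
    (hwG : ∀ k : ℕ, w ᵥ* (F ^ k * G) = 0) :
    ∃ (μ : K) (η : q → K), η ≠ 0 ∧ η ᵥ* F = μ • η ∧ η ᵥ* G = 0 := by
  let V : Submodule K (q → K) := ⨅ k : ℕ, LinearMap.ker (F ^ k * G).vecMulLinear
  have mem_V (z : q → K) : z ∈ V ↔ ∀ k : ℕ, z ᵥ* (F ^ k * G) = 0 := by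
    simp [V]
  have hFV : ∀ z ∈ V, F.vecMulLinear z ∈ V := by
    intro z hz
    rw [mem_V] at hz ⊢
    intro k
    rw [vecMulLinear_apply, vecMul_vecMul, ← Matrix.mul_assoc, ← pow_succ']
    exact hz (k + 1)
  have : Nontrivial V := Submodule.nontrivial_iff_ne_bot.mpr fun hV =>
    hw <| (Submodule.mem_bot K).mp (hV ▸ (mem_V w).mpr hwG)
  obtain ⟨μ, hμ⟩ := Module.End.exists_eigenvalue (F.vecMulLinear.restrict hFV)
  obtain ⟨⟨η, hηV⟩, hη⟩ := hμ.exists_hasEigenvector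
  refine ⟨μ, η, fun h0 => hη.2 (Subtype.ext h0), ?_, by simpa using (mem_V η).mp hηV 0⟩
  simpa using congrArg Subtype.val hη.apply_eq_smul

variable [Fintype r]

theorem exists_ne_zero_vecMul_pow_mul_eq_zero {K : Type*} [Field K]
    (F : Matrix q q K) (G : Matrix q r K)
    (h : ⨆ k : ℕ, LinearMap.range (F ^ k * G).mulVecLin ≠ ⊤) :
    ∃ w : q → K, w ≠ 0 ∧ ∀ k : ℕ, w ᵥ* (F ^ k * G) = 0 := by
  obtain ⟨f, hf, hle⟩ := Submodule.exists_le_ker_of_lt_top _ h.lt_top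
  refine ⟨(dotProductEquiv K q).symm f, by simpa using hf, fun k => ?_⟩
  refine dotProduct_eq_zero_iff.mp fun v => ?_
  have hv : (F ^ k * G) *ᵥ v ∈ ⨆ k : ℕ, LinearMap.range (F ^ k * G).mulVecLin :=
    Submodule.mem_iSup_of_mem k ⟨v, rfl⟩
  rw [← dotProduct_mulVec, ← dotProductEquiv_apply_apply, LinearEquiv.apply_symm_apply]
  exact hle hv

theorem iSup_range_pow_mul_eq_top_of_hautusCondition {F : Matrix q q ℝ} {G : Matrix q r ℝ}
    (h : HautusCondition F G) :
    ⨆ k : ℕ, LinearMap.range (F ^ k * G).mulVecLin = ⊤ := by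
  by_contra hne
  obtain ⟨w, hw, hwG⟩ := exists_ne_zero_vecMul_pow_mul_eq_zero F G hne
  have hw' : Complex.ofReal ∘ w ≠ 0 := fun h0 =>
    hw <| funext fun i => Complex.ofReal_eq_zero.mp (congrFun h0 i)
  obtain ⟨μ, η, hη, hηF, hηG⟩ := exists_left_eigenvector_vecMul_eq_zero (cmap F) (cmap G) hw'
    fun k => by rw [← cmap_pow, ← cmap_mul, ofReal_comp_vecMul, hwG k]; rfl
  exact h μ η hη hηF hηG

end Hautus

theorem LinearMap.range_le_range_sum_comp_proj {ι R M N : Type*} [DecidableEq ι] [Semiring R]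
    [AddCommMonoid M] [Module R M] [AddCommMonoid N] [Module R N] (f : ι → M →ₗ[R] N)
    {s : Finset ι} {i : ι} (hi : i ∈ s) :
    range (f i) ≤ range (∑ j ∈ s, f j ∘ₗ proj j) := by
  rintro _ ⟨v, rfl⟩
  refine ⟨Pi.single i v, ?_⟩
  simp [Pi.single_apply, apply_ite, hi]

section Reachability

variable {q r : Type*} [Fintype q] [Fintype r]

theorem exists_forall_eq_sum_pow_mul_mulVec {K : Type*} [Field K] [DecidableEq q]
    (F : Matrix q q K) (G : Matrix q r K)
    (h : ⨆ k : ℕ, LinearMap.range (F ^ k * G).mulVecLin = ⊤) :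
    ∃ T : ℕ, ∀ y : q → K, ∃ v : ℕ → r → K, ∑ k ∈ Finset.range T, (F ^ k * G) *ᵥ v k = y := by
  have hcompact : IsCompactElement (⊤ : Submodule K (q → K)) :=
    (Submodule.fg_iff_compact ⊤).mp Module.Finite.fg_top
  obtain ⟨s, hs⟩ := CompleteLattice.IsCompactElement.exists_finset_of_le_iSup _ hcompact _ h.ge
  let T := s.sup id + 1
  have hsT : ∀ k ∈ s, k ∈ Finset.range T := fun k hk =>
    Finset.mem_range.mpr (Nat.lt_succ_of_le (Finset.le_sup (f := id) hk))
  refine ⟨T, fun y => ?_⟩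
  obtain ⟨v, hv⟩ := hs.trans (iSup₂_le fun k hk =>
    LinearMap.range_le_range_sum_comp_proj (fun k => (F ^ k * G).mulVecLin) (hsT k hk))
    (Submodule.mem_top (x := y))
  exact ⟨v, by simpa using hv⟩

theorem eq_pow_mulVec_add_sum_of_recurrence {R : Type*} [CommRing R] [DecidableEq q]
    (F : Matrix q q R) (G : Matrix q r R) (u : ℕ → r → R) {x : ℕ → q → R}
    (hx : ∀ k, x (k + 1) = F *ᵥ x k + G *ᵥ u k) (T : ℕ) :
    x T = F ^ T *ᵥ x 0 + ∑ i ∈ Finset.range T, (F ^ i * G) *ᵥ u (T - 1 - i) := by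
  induction T with
  | zero => simp
  | succ T ih =>
    rw [hx, ih, Finset.sum_range_succ', mulVec_add, mulVec_sum]
    simp only [mulVec_mulVec, ← Matrix.mul_assoc, ← pow_succ', pow_zero, Matrix.one_mul,
      Nat.add_sub_cancel, Nat.sub_zero, Nat.sub_sub, Nat.add_comm 1, add_assoc]

theorem controllable_of_iSup_range_eq_top [DecidableEq q] {F : Matrix q q ℝ} {G : Matrix q r ℝ}
    (h : ⨆ k : ℕ, LinearMap.range (F ^ k * G).mulVecLin = ⊤) : Controllable F G := by
  obtain ⟨T, hT⟩ := exists_forall_eq_sum_pow_mul_mulVec F G h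
  intro x₀ xf
  obtain ⟨v, hv⟩ := hT (xf - F ^ T *ᵥ x₀)
  -- inputs are fed in reverse order: `u i` is multiplied by `F ^ (T - 1 - i) * G`
  let u : ℕ → r → ℝ := fun i => v (T - 1 - i)
  let x : ℕ → q → ℝ := fun k => Nat.rec x₀ (fun k xk => F *ᵥ xk + G *ᵥ u k) k
  refine ⟨T, u, x, rfl, fun k => rfl, ?_⟩
  have hu : ∑ i ∈ Finset.range T, (F ^ i * G) *ᵥ u (T - 1 - i)
      = ∑ i ∈ Finset.range T, (F ^ i * G) *ᵥ v i :=
    Finset.sum_congr rfl fun i hi => by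
      simp only [u, Nat.sub_sub_self (Nat.le_sub_one_of_lt (Finset.mem_range.mp hi))]
  rw [eq_pow_mulVec_add_sum_of_recurrence F G u (x := x) (fun k => rfl), hu, hv]
  exact add_sub_cancel _ _

theorem controllable_of_hautusCondition [DecidableEq q] {F : Matrix q q ℝ} {G : Matrix q r ℝ}
    (h : HautusCondition F G) : Controllable F G :=
  controllable_of_iSup_range_eq_top (iSup_range_pow_mul_eq_top_of_hautusCondition h)

end Reachability

section BlockTriangular

variable {a b c d : Type*} [Fintype a] [Fintype b]

theorem HautusCondition.of_submatrix {e : Type*} {F : Matrix a a ℝ} {G : Matrix a c ℝ}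
    (f : e → c) (h : HautusCondition F (G.submatrix id f)) : HautusCondition F G :=
  fun μ η hη hF hG => h μ η hη hF (congrArg (· ∘ f) hG)

theorem hautusCondition_fromBlocks [DecidableEq a] {F₁₁ : Matrix a a ℝ} {F₂₁ : Matrix b a ℝ}
    {F₂₂ : Matrix b b ℝ} {G₁ : Matrix a c ℝ} {G₂ : Matrix b d ℝ}
    (h₁ : HautusCondition F₁₁ G₁)
    (h₂ : ∀ (μ : ℂ) (η : b → ℂ) (ξ : a → ℂ), η ≠ 0 → η ᵥ* cmap F₂₂ = μ • η →
      ξ ᵥ* (μ • (1 : Matrix a a ℂ) - cmap F₁₁) = η ᵥ* cmap F₂₁ →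
      Sum.elim (ξ ᵥ* cmap G₁) (η ᵥ* cmap G₂) ≠ 0) :
    HautusCondition (fromBlocks F₁₁ 0 F₂₁ F₂₂) (fromBlocks G₁ 0 0 G₂) := by
  intro μ η hη hF
  obtain ⟨ξ, ζ, rfl⟩ : ∃ ξ ζ, η = Sum.elim ξ ζ := ⟨_, _, (Sum.elim_comp_inl_inr η).symm⟩
  simp only [cmap_fromBlocks, cmap_zero, vecMul_fromBlocks, vecMul_zero, add_zero, zero_add,
    Sum.elim_comp_inl, Sum.elim_comp_inr] at hF ⊢
  have hξ : ξ ᵥ* cmap F₁₁ + ζ ᵥ* cmap F₂₁ = μ • ξ :=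
    funext fun i => by simpa using congrFun hF (Sum.inl i)
  have hζ : ζ ᵥ* cmap F₂₂ = μ • ζ := funext fun i => by simpa using congrFun hF (Sum.inr i)
  by_cases hζ0 : ζ = 0
  · subst hζ0
    have hξ0 : ξ ≠ 0 := fun h => hη (by rw [h, Sum.elim_zero_zero])
    refine fun h0 => h₁ μ ξ hξ0 (by simpa using hξ) ?_
    exact (Sum.elim_eq_iff.mp (h0.trans Sum.elim_zero_zero.symm)).1
  · refine h₂ μ ζ ξ hζ0 hζ ?_
    rw [vecMul_sub, vecMul_smul, vecMul_one, ← hξ]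
    abel

end BlockTriangular

theorem multiScale_controllable_general
    (N n p l : ℕ) (hl : 1 ≤ l)
    (Φ22 : Matrix (Fin N × Fin n) (Fin N × Fin n) ℝ)
    (Ψ22 : Matrix (Fin N × Fin n) (Fin N × Fin p) ℝ)
    -- lifted matrices
    (Φt11 Φt21 : Matrix (Fin N × Fin n) (Fin N × Fin n) ℝ)
    (Ψt11 : Matrix (Fin N × Fin n) (Fin N × Fin p) ℝ)
    (Ψt22 : Matrix (Fin N × Fin n) (Fin l × (Fin N × Fin p)) ℝ)
    (hΨt22 : Ψt22 = Matrix.of fun a q => ((Φ22 ^ (l - 1 - (q.1 : ℕ))) * Ψ22) a q.2)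
    -- condition (1)
    (cond1 : ∀ (μ : ℂ) (η : Fin N × Fin n → ℂ), η ≠ 0 →
      η ᵥ* cmap Φt11 = μ • η → η ᵥ* cmap Ψt11 ≠ 0)
    -- condition (2)
    (cond2 : ∀ (μ : ℂ) (η ξ : Fin N × Fin n → ℂ), η ≠ 0 →
      η ᵥ* cmap (Φ22 ^ l) = μ • η →
      ξ ᵥ* (μ • (1 : Matrix (Fin N × Fin n) (Fin N × Fin n) ℂ) - cmap Φt11)
        = η ᵥ* cmap Φt21 →
      Sum.elim (ξ ᵥ* cmap Ψt11) (η ᵥ* cmap Ψ22) ≠ 0) :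
    Controllable (Matrix.fromBlocks Φt11 0 Φt21 (Φ22 ^ l))
      (Matrix.fromBlocks Ψt11 0 0 Ψt22) := by
  -- `Ψ22` is the last column block of `Ψt22`, the one with exponent `l - 1 - (l - 1) = 0`
  have hΨ : fromBlocks Ψt11 0 0 Ψ22 = (fromBlocks Ψt11 0 0 Ψt22).submatrix id
      (Sum.map id fun j => (⟨l - 1, by omega⟩, j)) := by
    subst hΨt22
    ext (i | i) (j | j) <;> simp
  have hHautus := hautusCondition_fromBlocks cond1 cond2
  rw [hΨ] at hHautus
  exact controllable_of_hautusCondition (hHautus.of_submatrix _)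

/-- sufficient controllability condition for the two-layer drive-response
networked sampled-data system under the Multi-scale sampling pattern (Corollary 5 in the
paper): the drive layer is sampled with period `l·h`, the response layer with period `h`. -/
theorem multiScale_controllable
    (N n m p l : ℕ) (hl : 1 ≤ l)
    (A1 A2 : Matrix (Fin n) (Fin n) ℝ) (B1 B2 : Matrix (Fin n) (Fin p) ℝ)
    (C1 C2 : Matrix (Fin m) (Fin n) ℝ) (H1 H2 : Matrix (Fin n) (Fin m) ℝ)
    (W1 W2 : Matrix (Fin N) (Fin N) ℝ) (Δ1 Δ2 : Matrix (Fin N) (Fin N) ℝ)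
    (hΔ1d : Δ1.IsDiag) (hΔ2d : Δ2.IsDiag)
    (hΔ1v : ∀ i, Δ1 i i = 0 ∨ Δ1 i i = 1) (hΔ2v : ∀ i, Δ2 i i = 0 ∨ Δ2 i i = 1)
    (D21 : Matrix (Fin N) (Fin N) ℝ) (P21 : Matrix (Fin n) (Fin m) ℝ)
    (h : ℝ) (hh : 0 < h)
    (Φ22 Φ21 : Matrix (Fin N × Fin n) (Fin N × Fin n) ℝ)
    (Ψ22 : Matrix (Fin N × Fin n) (Fin N × Fin p) ℝ)
    (hΦ22 : Φ22 = (1 : Matrix (Fin N) (Fin N) ℝ) ⊗ₖ matExp (h • A2)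
        + W2 ⊗ₖ (intExp A2 h * H2 * C2))
    (hΦ21 : Φ21 = D21 ⊗ₖ (intExp A2 h * P21 * C1))
    (hΨ22 : Ψ22 = Δ2 ⊗ₖ (intExp A2 h * B2))
    -- lifted matrices
    (Φt11 Φt21 : Matrix (Fin N × Fin n) (Fin N × Fin n) ℝ)
    (Ψt11 : Matrix (Fin N × Fin n) (Fin N × Fin p) ℝ)
    (Ψt22 : Matrix (Fin N × Fin n) (Fin l × (Fin N × Fin p)) ℝ)
    (hΦt11 : Φt11 = (1 : Matrix (Fin N) (Fin N) ℝ) ⊗ₖ matExp (((l : ℝ) * h) • A1)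
        + W1 ⊗ₖ (intExp A1 ((l : ℝ) * h) * H1 * C1))
    (hΦt21 : Φt21 = (∑ r ∈ Finset.range l, Φ22 ^ r) * Φ21)
    (hΨt11 : Ψt11 = Δ1 ⊗ₖ (intExp A1 ((l : ℝ) * h) * B1))
    (hΨt22 : Ψt22 = Matrix.of fun a q => ((Φ22 ^ (l - 1 - (q.1 : ℕ))) * Ψ22) a q.2)
    -- condition (1)
    (cond1 : ∀ (μ : ℂ) (η : Fin N × Fin n → ℂ), η ≠ 0 →
      η ᵥ* cmap Φt11 = μ • η → η ᵥ* cmap Ψt11 ≠ 0)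
    -- condition (2)
    (cond2 : ∀ (μ : ℂ) (η ξ : Fin N × Fin n → ℂ), η ≠ 0 →
      η ᵥ* cmap (Φ22 ^ l) = μ • η →
      ξ ᵥ* (μ • (1 : Matrix (Fin N × Fin n) (Fin N × Fin n) ℂ) - cmap Φt11)
        = η ᵥ* cmap Φt21 →
      Sum.elim (ξ ᵥ* cmap Ψt11) (η ᵥ* cmap Ψ22) ≠ 0) :
    Controllable (Matrix.fromBlocks Φt11 0 Φt21 (Φ22 ^ l))
      (Matrix.fromBlocks Ψt11 0 0 Ψt22) :=
  multiScale_controllable_general N n p l hl Φ22 Ψ22 Φt11 Φt21 Ψt11 Ψt22 hΨt22 cond1 cond2
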